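/- arXiv:1704.04647 — 5 statements merged into one kernel-verified Lean document; each statement's English description precedes it below -/
import Mathlib

section
/- Let F be a functor on sets and Γ a relator for F. Then Γ ∩ Γᶜ (defined pointwise by (Γ ∩ Γᶜ)(R) = Γ R ∩ Γᶜ R, where Γᶜ(R) = (Γ(Rᶜ))ᶜ) is the greatest conversive relator for F contained in Γ with respect to the pointwise order: it is a relator, it is conversive, (Γ ∩ Γᶜ)(R) ⊆ Γ R for all R, and any conversive relator Δ for F with Δ R ⊆ Γ R for all R satisfies Δ R ⊆ (Γ ∩ Γᶜ)(R) for all R. -/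
/-- A relator for a functor `F` on sets (with action on functions `Fmap`):
a map sending each relation `R ⊆ α × β` to a relation `Γ R ⊆ F α × F β`,
satisfying conditions (Rel-1)–(Rel-4). -/
structure SetRelator (F : Type → Type) (Fmap : ∀ {α β : Type}, (α → β) → F α → F β) where
  rel : ∀ {α β : Type}, (α → β → Prop) → F α → F β → Prop
  /-- (Rel-1): the identity relation on `F α` is contained in `Γ` of the identity. -/
  rel1 : ∀ {α : Type} (t : F α), rel (fun x y => x = y) t t
  /-- (Rel-2): `Γ S ∘ Γ R ⊆ Γ (S ∘ R)`. -/
  rel2 : ∀ {α β γ : Type} {R : α → β → Prop} {S : β → γ → Prop} {a : F α} {b : F β} {c : F γ},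
      rel R a b → rel S b c → rel (fun x z => ∃ y, R x y ∧ S y z) a c
  /-- (Rel-3): `Γ ((f × g)⁻¹ R) = (F f × F g)⁻¹ (Γ R)`. -/
  rel3 : ∀ {α β α' β' : Type} (f : α' → α) (g : β' → β) (R : α → β → Prop)
      (a : F α') (b : F β'),
      rel (fun z w => R (f z) (g w)) a b ↔ rel R (Fmap f a) (Fmap g b)
  /-- (Rel-4): monotonicity. -/
  rel4 : ∀ {α β : Type} {R S : α → β → Prop}, (∀ x y, R x y → S x y) →
      ∀ {a : F α} {b : F β}, rel R a b → rel S a b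

/-- A relator is conversive if `Γ (Rᶜ) = (Γ R)ᶜ` for every relation `R`. -/
def SetRelator.Conversive {F : Type → Type} {Fmap : ∀ {α β : Type}, (α → β) → F α → F β}
    (Γ : SetRelator F Fmap) : Prop :=
  ∀ {α β : Type} (R : α → β → Prop) (a : F α) (b : F β),
    Γ.rel (fun y x => R x y) b a ↔ Γ.rel R a b

/-- The relator `Γ ∩ Γᶜ`: `(Γ ∩ Γᶜ)(R) = Γ R ∩ (Γ (Rᶜ))ᶜ`. -/
def interConv {F : Type → Type} {Fmap : ∀ {α β : Type}, (α → β) → F α → F β}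
    (Γ : SetRelator F Fmap) {α β : Type} (R : α → β → Prop) (a : F α) (b : F β) : Prop :=
  Γ.rel R a b ∧ Γ.rel (fun y x => R x y) b a

/-! The converse `Γᶜ` of a relator is again a relator, and relators are closed under pointwise
intersection, so `interConv Γ = Γ ⊓ Γᶜ` is a relator; taking converses swaps its two components.
A conversive `Δ ⊆ Γ` satisfies `Δ = Δᶜ ⊆ Γᶜ`, hence `Δ ⊆ Γ ⊓ Γᶜ`. -/

namespace SetRelator

variable {F : Type → Type} {Fmap : ∀ {α β : Type}, (α → β) → F α → F β}

def converse (Γ : SetRelator F Fmap) : SetRelator F Fmap where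
  rel R a b := Γ.rel (fun y x => R x y) b a
  rel1 t := Γ.rel4 (fun _ _ h => h.symm) (Γ.rel1 t)
  rel2 hR hS := Γ.rel4 (fun _ _ ⟨y, hS, hR⟩ => ⟨y, hR, hS⟩) (Γ.rel2 hS hR)
  rel3 f g R a b := Γ.rel3 g f (fun y x => R x y) b a
  rel4 hRS := Γ.rel4 fun y x => hRS x y

def inf (Γ Δ : SetRelator F Fmap) : SetRelator F Fmap where
  rel R a b := Γ.rel R a b ∧ Δ.rel R a b
  rel1 t := ⟨Γ.rel1 t, Δ.rel1 t⟩
  rel2 hR hS := ⟨Γ.rel2 hR.1 hS.1, Δ.rel2 hR.2 hS.2⟩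
  rel3 f g R a b := and_congr (Γ.rel3 f g R a b) (Δ.rel3 f g R a b)
  rel4 hRS := And.imp (Γ.rel4 hRS) (Δ.rel4 hRS)

theorem conversive_inf_converse (Γ : SetRelator F Fmap) : (Γ.inf Γ.converse).Conversive :=
  fun _ _ _ => and_comm

theorem Conversive.rel_converse {Δ : SetRelator F Fmap} (hΔ : Δ.Conversive)
    {α β : Type} {R : α → β → Prop} {a : F α} {b : F β} (h : Δ.rel R a b) :
    Δ.converse.rel R a b :=
  (hΔ R a b).2 h

end SetRelator

open SetRelator in
/-- `Γ ∩ Γᶜ` is the greatest conversive relator contained in `Γ`: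
it is a relator (satisfies (Rel-1)–(Rel-4)), it is conversive, it is contained
in `Γ`, and any conversive relator `Δ` contained in `Γ` is contained in it. -/
theorem interConv_greatest_conversive_relator
    (F : Type → Type) (Fmap : ∀ {α β : Type}, (α → β) → F α → F β)
    (Γ : SetRelator F Fmap) :
    (∀ (α : Type) (t : F α), interConv Γ (fun x y : α => x = y) t t) ∧
    (∀ (α β γ : Type) (R : α → β → Prop) (S : β → γ → Prop)
        (a : F α) (b : F β) (c : F γ),
        interConv Γ R a b → interConv Γ S b c →
        interConv Γ (fun x z => ∃ y, R x y ∧ S y z) a c) ∧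
    (∀ (α β α' β' : Type) (f : α' → α) (g : β' → β) (R : α → β → Prop)
        (a : F α') (b : F β'),
        interConv Γ (fun z w => R (f z) (g w)) a b ↔
          interConv Γ R (Fmap f a) (Fmap g b)) ∧
    (∀ (α β : Type) (R S : α → β → Prop), (∀ x y, R x y → S x y) →
        ∀ (a : F α) (b : F β), interConv Γ R a b → interConv Γ S a b) ∧
    (∀ (α β : Type) (R : α → β → Prop) (a : F α) (b : F β),
        interConv Γ (fun (y : β) (x : α) => R x y) b a ↔ interConv Γ R a b) ∧
    (∀ (α β : Type) (R : α → β → Prop) (a : F α) (b : F β),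
        interConv Γ R a b → Γ.rel R a b) ∧
    (∀ Δ : SetRelator F Fmap, Δ.Conversive →
        (∀ (α β : Type) (R : α → β → Prop) (a : F α) (b : F β),
          Δ.rel R a b → Γ.rel R a b) →
        ∀ (α β : Type) (R : α → β → Prop) (a : F α) (b : F β),
          Δ.rel R a b → interConv Γ R a b) := by
  set Γ' := Γ.inf Γ.converse
  refine ⟨fun _ => Γ'.rel1, fun _ _ _ _ _ _ _ _ => Γ'.rel2, fun _ _ _ _ => Γ'.rel3,
    fun _ _ _ _ hRS _ _ => Γ'.rel4 hRS, fun _ _ => conversive_inf_converse Γ,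
    fun _ _ _ _ _ => And.left, ?_⟩
  intro Δ hΔ hΔΓ α β R a b h
  exact ⟨hΔΓ _ _ R a b h, hΔΓ _ _ _ b a (hΔ.rel_converse h)⟩
end

section
/- Let F be a functor on sets, Γ a relator for F, and γ_X : X → F X an F-coalgebra. Then Γ-bisimilarity on X, defined as (Γ ∩ Γᶜ)-similarity (the largest (Γ ∩ Γᶜ)-simulation), is an equivalence relation: reflexive, symmetric, and transitive. -/
/-- A `Γ`-bisimulation on an `F`-coalgebra `γX`, i.e., a `(Γ ∩ Γᶜ)`-simulation. -/
def IsGammaBisim {F : Type → Type} {Fmap : ∀ {α β : Type}, (α → β) → F α → F β}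
    (Γ : SetRelator F Fmap) {X : Type} (γX : X → F X) (R : X → X → Prop) : Prop :=
  ∀ x y, R x y → Γ.rel R (γX x) (γX y) ∧ Γ.rel (fun b a => R a b) (γX y) (γX x)

/-- `Γ`-bisimilarity: the largest `(Γ ∩ Γᶜ)`-simulation. -/
def GammaBisimilarity {F : Type → Type} {Fmap : ∀ {α β : Type}, (α → β) → F α → F β}
    (Γ : SetRelator F Fmap) {X : Type} (γX : X → F X) : X → X → Prop :=
  fun x y => ∃ R : X → X → Prop, IsGammaBisim Γ γX R ∧ R x y

namespace IsGammaBisim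

variable {F : Type → Type} {Fmap : ∀ {α β : Type}, (α → β) → F α → F β}
  {Γ : SetRelator F Fmap} {X : Type} {γX : X → F X}

theorem eq : IsGammaBisim Γ γX Eq := by
  rintro x _ rfl
  exact ⟨Γ.rel1 _, Γ.rel4 (fun _ _ h => h.symm) (Γ.rel1 _)⟩

theorem flip {R : X → X → Prop} (hR : IsGammaBisim Γ γX R) :
    IsGammaBisim Γ γX (flip R) :=
  fun x y hxy => (hR y x hxy).symm

theorem comp {R S : X → X → Prop} (hR : IsGammaBisim Γ γX R) (hS : IsGammaBisim Γ γX S) :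
    IsGammaBisim Γ γX (Relation.Comp R S) := by
  rintro x z ⟨y, hxy, hyz⟩
  refine ⟨Γ.rel2 (hR x y hxy).1 (hS y z hyz).1, ?_⟩
  -- The converse of a composite is the composite of the converses, in the opposite order.
  exact Γ.rel4 (fun _ _ ⟨w, hzw, hwx⟩ => ⟨w, hwx, hzw⟩) (Γ.rel2 (hS y z hyz).2 (hR x y hxy).2)

end IsGammaBisim

/-- `Γ`-bisimilarity, defined as `(Γ ∩ Γᶜ)`-similarity, is an equivalence
relation: reflexive, symmetric and transitive. -/
theorem gammaBisimilarity_equivalence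
    (F : Type → Type) (Fmap : ∀ {α β : Type}, (α → β) → F α → F β)
    (Γ : SetRelator F Fmap) (X : Type) (γX : X → F X) :
    Equivalence (GammaBisimilarity Γ γX) :=
  ⟨fun _ => ⟨Eq, .eq, rfl⟩,
    fun ⟨R, hR, hxy⟩ => ⟨flip R, hR.flip, hxy⟩,
    fun ⟨R, hR, hxy⟩ ⟨S, hS, hyz⟩ => ⟨Relation.Comp R S, hR.comp hS, _, hxy, hyz⟩⟩
end

section
/- Let T be a functor on sets and Γ a relator for T. Let an applicative transition system be given by sets X (terms) and Y (values), an evaluation function ε : X → T Y, and an application function · : Y → Y → X. Define the monotone operator B_Γ on pairs (R_X, R_Y) of relations on X and on Y by B_Γ(R_X) = {(x,x') | ε(x) (Γ R_Y) ε(x')} and B_Γ(R_Y) = {(y,y') | ∀ w ∈ Y, (y · w) R_X (y' · w)}, and let applicative Γ-similarity be its greatest fixed point. Then: (1) applicative Γ-similarity is a preorder (each component is reflexive and transitive); (2) if Γ is conversive, applicative Γ-similarity is an equivalence relation in each component. -/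
/-- An applicative `Γ`-simulation on an applicative transition system with
terms `X`, values `Y`, evaluation `ε : X → T Y` and application
`app : Y → Y → X`: a pair `(RX, RY)` that is a post-fixed point of the
monotone operator `B_Γ`. -/
def IsAppSim {T : Type → Type} {Tmap : ∀ {α β : Type}, (α → β) → T α → T β}
    (Γ : SetRelator T Tmap) {X Y : Type} (ε : X → T Y) (app : Y → Y → X)
    (RX : X → X → Prop) (RY : Y → Y → Prop) : Prop :=
  (∀ x x', RX x x' → Γ.rel RY (ε x) (ε x')) ∧
  (∀ y y', RY y y' → ∀ w : Y, RX (app y w) (app y' w))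

/-- The term component of applicative `Γ`-similarity (the greatest fixed point
of `B_Γ`, i.e., the union of all applicative `Γ`-simulations). -/
def AppSimT {T : Type → Type} {Tmap : ∀ {α β : Type}, (α → β) → T α → T β}
    (Γ : SetRelator T Tmap) {X Y : Type} (ε : X → T Y) (app : Y → Y → X) :
    X → X → Prop :=
  fun x x' => ∃ (RX : X → X → Prop) (RY : Y → Y → Prop),
    IsAppSim Γ ε app RX RY ∧ RX x x'

/-- The value component of applicative `Γ`-similarity. -/
def AppSimV {T : Type → Type} {Tmap : ∀ {α β : Type}, (α → β) → T α → T β}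
    (Γ : SetRelator T Tmap) {X Y : Type} (ε : X → T Y) (app : Y → Y → X) :
    Y → Y → Prop :=
  fun y y' => ∃ (RX : X → X → Prop) (RY : Y → Y → Prop),
    IsAppSim Γ ε app RX RY ∧ RY y y'

/-! Similarity is the union of all simulations, so it suffices to see that simulations contain
the identity (Rel-1), are closed under relational composition (Rel-2), and, for a conversive
relator, under taking converses. -/

section

variable {T : Type → Type} {Tmap : ∀ {α β : Type}, (α → β) → T α → T β}
  {Γ : SetRelator T Tmap} {X Y : Type} {ε : X → T Y} {app : Y → Y → X}
  {RX SX : X → X → Prop} {RY SY : Y → Y → Prop}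

theorem IsAppSim.eq : IsAppSim Γ ε app Eq Eq :=
  ⟨fun x _ hx => hx ▸ Γ.rel1 (ε x), fun _ _ hy _ => hy ▸ rfl⟩

theorem IsAppSim.relComp (hR : IsAppSim Γ ε app RX RY) (hS : IsAppSim Γ ε app SX SY) :
    IsAppSim Γ ε app (Relation.Comp RX SX) (Relation.Comp RY SY) := by
  constructor
  · rintro x z ⟨y, hxy, hyz⟩
    exact Γ.rel2 (hR.1 x y hxy) (hS.1 y z hyz)
  · rintro y y' ⟨z, hyz, hzy'⟩ w
    exact ⟨app z w, hR.2 y z hyz w, hS.2 z y' hzy' w⟩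

theorem IsAppSim.flip (hΓ : Γ.Conversive) (hR : IsAppSim Γ ε app RX RY) :
    IsAppSim Γ ε app (_root_.flip RX) (_root_.flip RY) :=
  ⟨fun x x' hx => (hΓ (_root_.flip RY) (ε x) (ε x')).mp (hR.1 x' x hx),
    fun y y' hy w => hR.2 y' y hy w⟩

theorem AppSimT.reflexive : Reflexive (AppSimT Γ ε app) :=
  fun _ => ⟨_, _, IsAppSim.eq, rfl⟩

theorem AppSimV.reflexive : Reflexive (AppSimV Γ ε app) :=
  fun _ => ⟨_, _, IsAppSim.eq, rfl⟩

theorem AppSimT.transitive : Transitive (AppSimT Γ ε app) :=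
  fun _ b _ ⟨_, _, hR, hab⟩ ⟨_, _, hS, hbc⟩ => ⟨_, _, hR.relComp hS, b, hab, hbc⟩

theorem AppSimV.transitive : Transitive (AppSimV Γ ε app) :=
  fun _ b _ ⟨_, _, hR, hab⟩ ⟨_, _, hS, hbc⟩ => ⟨_, _, hR.relComp hS, b, hab, hbc⟩

theorem AppSimT.symmetric (hΓ : Γ.Conversive) : Symmetric (AppSimT Γ ε app) :=
  fun _ _ ⟨_, _, hR, hab⟩ => ⟨_, _, hR.flip hΓ, hab⟩

theorem AppSimV.symmetric (hΓ : Γ.Conversive) : Symmetric (AppSimV Γ ε app) :=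
  fun _ _ ⟨_, _, hR, hab⟩ => ⟨_, _, hR.flip hΓ, hab⟩

theorem AppSimT.equivalence (hΓ : Γ.Conversive) : Equivalence (AppSimT Γ ε app) :=
  ⟨AppSimT.reflexive, fun h => AppSimT.symmetric hΓ h, fun h h' => AppSimT.transitive h h'⟩

theorem AppSimV.equivalence (hΓ : Γ.Conversive) : Equivalence (AppSimV Γ ε app) :=
  ⟨AppSimV.reflexive, fun h => AppSimV.symmetric hΓ h, fun h h' => AppSimV.transitive h h'⟩

end

/-- (1) Applicative `Γ`-similarity is a preorder (both components are reflexive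
and transitive); (2) if `Γ` is conversive, both components are equivalence
relations. -/
theorem applicative_similarity_preorder_and_equivalence
    (T : Type → Type) (Tmap : ∀ {α β : Type}, (α → β) → T α → T β)
    (Γ : SetRelator T Tmap) (X Y : Type) (ε : X → T Y) (app : Y → Y → X) :
    (Reflexive (AppSimT Γ ε app) ∧ Transitive (AppSimT Γ ε app) ∧
     Reflexive (AppSimV Γ ε app) ∧ Transitive (AppSimV Γ ε app)) ∧
    (Γ.Conversive →
      Equivalence (AppSimT Γ ε app) ∧ Equivalence (AppSimV Γ ε app)) :=
  ⟨⟨AppSimT.reflexive, AppSimT.transitive, AppSimV.reflexive, AppSimV.transitive⟩,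
    fun hΓ => ⟨AppSimT.equivalence hΓ, AppSimV.equivalence hΓ⟩⟩
end

section
/- Let μ be a subdistribution on X, ν a subdistribution on Y, and R ⊆ X × Y a relation such that for every subset U ⊆ X, μ(U) ≤ ν(R(U)), where μ(U) = ∑'_{x ∈ U} μ(x) and R(U) = {y | ∃ x ∈ U, x R y}. Let f : X → D(Z), g : Y → D(W), and S ⊆ Z × W be such that whenever x R y, for every subset A ⊆ Z, (f x)(A) ≤ (g y)(S(A)). Then for every subset A ⊆ Z, (μ >>= f)(A) ≤ (ν >>= g)(S(A)), where (μ >>= f)(z) = ∑'_{x} μ(x) · f(x)(z). In other words, the probabilistic relator Γ_D, defined by μ (Γ_D R) ν iff ∀ U ⊆ X, μ(U) ≤ ν(R(U)), satisfies the Lax-Bind condition for the subdistribution monad. -/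
open scoped ENNReal
open MeasureTheory Set

/-- The mass that `μ` assigns to a subset `U`: `μ(U) = ∑' x ∈ U, μ x`. -/
noncomputable def mass {X : Type} (μ : X → ℝ≥0∞) (U : Set X) : ℝ≥0∞ :=
  ∑' x : U, μ x

/-- The relational image `R(U) = {y | ∃ x ∈ U, x R y}`. -/
def relImg {X Y : Type} (R : X → Y → Prop) (U : Set X) : Set Y :=
  {y | ∃ x ∈ U, R x y}

/-- Bind of subdistributions: `(μ >>= f)(z) = ∑' x, μ x * f x z`. -/
noncomputable def bindD {X Z : Type} (μ : X → ℝ≥0∞) (f : X → Z → ℝ≥0∞) : Z → ℝ≥0∞ :=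
  fun z => ∑' x, μ x * f x z

/-!
Writing `(μ >>= f)(A) = ∑' x, μ x * (f x)(A)`, the claim is an instance of a monotonicity
principle: if `μ (Γ_D R) ν` and `a x ≤ b y` whenever `x R y`, then `∫ a dμ ≤ ∫ b dν`.
By the layer cake formula both integrals are integrals over `t > 0` of the masses of the
superlevel sets `{a ≥ t}` and `{b ≥ t}`, and `R` maps the first into the second.
-/

lemma lintegral_eq_lintegral_meas_le_toReal {Z : Type*} [MeasurableSpace Z] (P : Measure Z)
    {c : Z → ℝ≥0∞} (hc : Measurable c) (hc_top : ∀ z, c z ≠ ∞) :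
    ∫⁻ z, c z ∂P = ∫⁻ t in Ioi 0, P {z | t ≤ (c z).toReal} := by
  rw [← lintegral_eq_lintegral_meas_le P (.of_forall fun _ => ENNReal.toReal_nonneg)
    hc.ennreal_toReal.aemeasurable]
  simp only [ENNReal.ofReal_toReal (hc_top _)]

theorem lintegral_le_lintegral_of_le_relImg {X Y : Type} [MeasurableSpace X] [MeasurableSpace Y]
    (M : Measure X) (N : Measure Y) {R : X → Y → Prop}
    (hR : ∀ U, MeasurableSet U → M U ≤ N (relImg R U)) {a : X → ℝ≥0∞} {b : Y → ℝ≥0∞}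
    (ha : Measurable a) (hb : Measurable b) (ha_top : ∀ x, a x ≠ ∞) (hb_top : ∀ y, b y ≠ ∞)
    (hab : ∀ x y, R x y → a x ≤ b y) :
    ∫⁻ x, a x ∂M ≤ ∫⁻ y, b y ∂N := by
  rw [lintegral_eq_lintegral_meas_le_toReal M ha ha_top,
    lintegral_eq_lintegral_meas_le_toReal N hb hb_top]
  refine lintegral_mono fun t => (hR _ (measurableSet_le measurable_const
    ha.ennreal_toReal)).trans (measure_mono ?_)
  rintro y ⟨x, hx, hxy⟩
  exact hx.trans (ENNReal.toReal_mono (hb_top y) (hab x y hxy))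

section Discrete

variable {X : Type} [MeasurableSpace X] [DiscreteMeasurableSpace X]

lemma sum_smul_dirac_apply (w : X → ℝ≥0∞) (U : Set X) :
    Measure.sum (fun x => w x • Measure.dirac x) U = mass w U := by
  rw [Measure.sum_apply _ .of_discrete, mass, tsum_subtype]
  refine tsum_congr fun x => ?_
  by_cases hx : x ∈ U <;> simp [hx]

lemma lintegral_sum_smul_dirac (w h : X → ℝ≥0∞) :
    ∫⁻ x, h x ∂Measure.sum (fun x => w x • Measure.dirac x) = ∑' x, w x * h x := by
  simp only [lintegral_sum_measure, lintegral_smul_measure, lintegral_dirac, smul_eq_mul]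

end Discrete

theorem tsum_mul_le_tsum_mul_of_le_relImg {X Y : Type} (μ : X → ℝ≥0∞) (ν : Y → ℝ≥0∞)
    {R : X → Y → Prop} (hR : ∀ U : Set X, mass μ U ≤ mass ν (relImg R U))
    {a : X → ℝ≥0∞} {b : Y → ℝ≥0∞} (ha_top : ∀ x, a x ≠ ∞) (hb_top : ∀ y, b y ≠ ∞)
    (hab : ∀ x y, R x y → a x ≤ b y) :
    ∑' x, μ x * a x ≤ ∑' y, ν y * b y := by
  let _ : MeasurableSpace X := ⊤
  let _ : MeasurableSpace Y := ⊤
  have hRmeas (U : Set X) (_ : MeasurableSet U) :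
      Measure.sum (fun x => μ x • Measure.dirac x) U ≤
        Measure.sum (fun y => ν y • Measure.dirac y) (relImg R U) := by
    simpa only [sum_smul_dirac_apply] using hR U
  simpa only [lintegral_sum_smul_dirac] using
    lintegral_le_lintegral_of_le_relImg _ _ hRmeas .of_discrete .of_discrete ha_top hb_top hab

lemma mass_bindD {X Z : Type} (μ : X → ℝ≥0∞) (f : X → Z → ℝ≥0∞) (A : Set Z) :
    mass (bindD μ f) A = ∑' x, μ x * mass (f x) A := by
  simp only [mass, bindD]
  rw [ENNReal.tsum_comm]
  exact tsum_congr fun x => ENNReal.tsum_mul_left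

lemma mass_le_tsum {X : Type} (μ : X → ℝ≥0∞) (U : Set X) : mass μ U ≤ ∑' x, μ x :=
  ENNReal.tsum_comp_le_tsum_of_injective Subtype.val_injective μ

theorem probabilistic_relator_lax_bind_general (X Y Z W : Type)
    (μ : X → ℝ≥0∞)
    (ν : Y → ℝ≥0∞)
    (R : X → Y → Prop)
    (hR : ∀ U : Set X, mass μ U ≤ mass ν (relImg R U))
    (f : X → Z → ℝ≥0∞) (hf : ∀ x, (∑' z, f x z) ≤ 1)
    (g : Y → W → ℝ≥0∞) (hg : ∀ y, (∑' w, g y w) ≤ 1)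
    (S : Z → W → Prop)
    (hfg : ∀ x y, R x y → ∀ A : Set Z, mass (f x) A ≤ mass (g y) (relImg S A)) :
    ∀ A : Set Z, mass (bindD μ f) A ≤ mass (bindD ν g) (relImg S A) := by
  intro A
  have hf_top x : mass (f x) A ≠ ∞ :=
    ne_top_of_le_ne_top ENNReal.one_ne_top ((mass_le_tsum _ _).trans (hf x))
  have hg_top y : mass (g y) (relImg S A) ≠ ∞ :=
    ne_top_of_le_ne_top ENNReal.one_ne_top ((mass_le_tsum _ _).trans (hg y))
  rw [mass_bindD, mass_bindD]
  exact tsum_mul_le_tsum_mul_of_le_relImg μ ν hR hf_top hg_top fun x y hxy => hfg x y hxy A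

/-- The probabilistic relator `Γ_D` (`μ (Γ_D R) ν` iff `μ(U) ≤ ν(R(U))` for
every `U`) satisfies the Lax-Bind condition for the subdistribution monad. -/
theorem probabilistic_relator_lax_bind (X Y Z W : Type)
    (μ : X → ℝ≥0∞) (hμ : (∑' x, μ x) ≤ 1)
    (ν : Y → ℝ≥0∞) (hν : (∑' y, ν y) ≤ 1)
    (R : X → Y → Prop)
    (hR : ∀ U : Set X, mass μ U ≤ mass ν (relImg R U))
    (f : X → Z → ℝ≥0∞) (hf : ∀ x, (∑' z, f x z) ≤ 1)
    (g : Y → W → ℝ≥0∞) (hg : ∀ y, (∑' w, g y w) ≤ 1)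
    (S : Z → W → Prop)
    (hfg : ∀ x y, R x y → ∀ A : Set Z, mass (f x) A ≤ mass (g y) (relImg S A)) :
    ∀ A : Set Z, mass (bindD μ f) A ≤ mass (bindD ν g) (relImg S A) :=
  probabilistic_relator_lax_bind_general X Y Z W μ ν R hR f hf g hg S hfg
end

section
/- The probabilistic relator Γ_D is inductive: for any relation R ⊆ X × Y, (1) the zero subdistribution 0 on X satisfies 0 (Γ_D R) ν for every subdistribution ν on Y; (2) if (μ_n)_{n<ω} is a pointwise monotone sequence of subdistributions on X with μ_n (Γ_D R) ν for every n, then the pointwise supremum ⨆_n μ_n satisfies (⨆_n μ_n) (Γ_D R) ν. -/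
open scoped ENNReal

/-- The probabilistic relator `Γ_D`:
`μ (Γ_D R) ν` iff `μ(U) ≤ ν(R(U))` for every subset `U`. -/
def GammaD {X Y : Type} (R : X → Y → Prop) (μ : X → ℝ≥0∞) (ν : Y → ℝ≥0∞) : Prop :=
  ∀ U : Set X, mass μ U ≤ mass ν (relImg R U)

/-! Both sides of a `GammaD` inequality are sums over a fixed set, and an `ℝ≥0∞`-valued sum is
the supremum of its finite partial sums; finite sums commute with directed suprema, hence so do
infinite ones, and `μ(U) ≤ ν(R(U))` passes to the supremum of a directed family `μ`. -/

theorem ENNReal.tsum_iSup_of_directed {ι : Type*} {α : Type*} {f : ι → α → ℝ≥0∞}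
    (hf : Directed (· ≤ ·) f) : ∑' a, ⨆ i, f i a = ⨆ i, ∑' a, f i a := by
  simp_rw [ENNReal.tsum_eq_iSup_sum]
  rw [iSup_comm]
  congr 1
  ext s
  exact ENNReal.finsetSum_iSup fun i j => (hf i j).imp fun _ ⟨hi, hj⟩ a => ⟨hi a, hj a⟩

theorem mass_iSup_of_directed {ι : Type*} {X : Type} {μ : ι → X → ℝ≥0∞}
    (hμ : Directed (· ≤ ·) μ) (U : Set X) :
    mass (fun x => ⨆ i, μ i x) U = ⨆ i, mass (μ i) U :=
  ENNReal.tsum_iSup_of_directed fun i j =>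
    (hμ i j).imp fun _ ⟨hi, hj⟩ => ⟨fun x => hi x, fun x => hj x⟩

theorem GammaD.zero_left {X Y : Type} (R : X → Y → Prop) (ν : Y → ℝ≥0∞) :
    GammaD R (fun _ => 0) ν := by
  intro U
  simp [mass]

theorem GammaD.iSup_left {ι : Type*} {X Y : Type} {R : X → Y → Prop} {μ : ι → X → ℝ≥0∞}
    {ν : Y → ℝ≥0∞} (hμ : Directed (· ≤ ·) μ) (h : ∀ i, GammaD R (μ i) ν) :
    GammaD R (fun x => ⨆ i, μ i x) ν := by
  intro U
  rw [mass_iSup_of_directed hμ U]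
  exact iSup_le fun i => h i U

/-- The probabilistic relator `Γ_D` is inductive: (1) the zero subdistribution
is `Γ_D R`-below every subdistribution; (2) `Γ_D R` is closed under pointwise
suprema of pointwise monotone sequences of subdistributions on the left. -/
theorem probabilistic_relator_inductive (X Y : Type) (R : X → Y → Prop) :
    (∀ ν : Y → ℝ≥0∞, (∑' y, ν y) ≤ 1 → GammaD R (fun _ => 0) ν) ∧
    (∀ μ : ℕ → X → ℝ≥0∞, (∀ n, μ n ≤ μ (n + 1)) → (∀ n, (∑' x, μ n x) ≤ 1) →
      ∀ ν : Y → ℝ≥0∞, (∑' y, ν y) ≤ 1 →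
      (∀ n, GammaD R (μ n) ν) →
      GammaD R (fun x => ⨆ n, μ n x) ν) :=
  ⟨fun ν _ => GammaD.zero_left R ν,
    fun _ hμ _ _ _ h => GammaD.iSup_left (monotone_nat_of_le_succ hμ).directed_le h⟩
end
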